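/- If a fact φ ∈ F is a landmark of the relaxed HGN planning problem (s₀, gn₀), then for every relevance relation rel, every plan π ∈ S(s₀, gn₀) has φ in some intermediate state; i.e., φ is a landmark of the HGN planning problem (s₀, gn₀). -/

import Mathlib

open scoped Classical

/-- An action: precondition, add effects, delete effects, and a nonnegative cost. -/
structure PAction (F : Type*) where
  pre : Set F
  add : Set F
  del : Set F
  cost : NNReal

variable {F : Type*}

/-- The state resulting from applying action `a` in state `s`: `(s \ del a) ∪ add a`. -/
def applyAction (s : Set F) (a : PAction F) : Set F := (s \ a.del) ∪ a.add

/-- A plan is executable from `s` if each action's precondition holds in the state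
produced by the previous actions. -/
def Exec : Set F → List (PAction F) → Prop
  | _, [] => True
  | s, a :: rest => a.pre ⊆ s ∧ Exec (applyAction s a) rest

/-- The state obtained by running a plan from `s`. -/
def runPlan : Set F → List (PAction F) → Set F
  | s, [] => s
  | s, a :: rest => runPlan (applyAction s a) rest

/-- The `i`-th intermediate state `σᵢ` of a plan `π` started in `s`
(the result of executing the first `i` actions). -/
def stateAt (s : Set F) (π : List (PAction F)) (i : ℕ) : Set F := runPlan s (π.take i)

/-- The cost of a plan: the sum of the costs of its actions (with multiplicity). -/
def planCost (π : List (PAction F)) : NNReal := (π.map PAction.cost).sum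

/-- A plan solves the classical planning problem `(s₀, g)` (with `g` a set of states)
if it is executable from `s₀` and its final state lies in `g`. -/
def Solves (s₀ : Set F) (g : Set (Set F)) (π : List (PAction F)) : Prop :=
  Exec s₀ π ∧ stateAt s₀ π π.length ∈ g

/-- A fact `φ` is a landmark of the problem `(s₀, g)` if every solution plan has `φ`
in some intermediate state. -/
def IsLandmark (s₀ : Set F) (g : Set (Set F)) (φ : F) : Prop :=
  ∀ π, Solves s₀ g π → ∃ i ≤ π.length, φ ∈ stateAt s₀ π i

/-- A goal network: a finite set `T` of nodes, an order relation `prec` on the nodes,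
and a goal (a set of states) attached to each node. -/
structure GoalNetwork (F : Type*) (ν : Type*) where
  T : Finset ν
  prec : ν → ν → Prop
  goal : ν → Set (Set F)

variable {ν : Type*}

/-- `prec` is a strict partial order on the nodes of the network. -/
def GoalNetwork.IsStrictOrder (gn : GoalNetwork F ν) : Prop :=
  (∀ t ∈ gn.T, ¬ gn.prec t t) ∧
    (∀ t ∈ gn.T, ∀ u ∈ gn.T, ∀ v ∈ gn.T, gn.prec t u → gn.prec u v → gn.prec t v)

/-- A node is unconstrained if it has no `≺`-predecessor in the network. -/
def Unconstrained (gn : GoalNetwork F ν) (t : ν) : Prop := ∀ u ∈ gn.T, ¬ gn.prec u t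

/-- A plan `π` solves the relaxed HGN planning problem `(s₀, gn)` if it is executable from
`s₀` and there is `τ : T → {0,…,n}` with `σ_{τ t} ∈ goal t` for all `t ∈ T` and
`τ t ≤ τ u` whenever `t ≺ u`. -/
def SolvesRelaxed (s₀ : Set F) (gn : GoalNetwork F ν) (π : List (PAction F)) : Prop :=
  Exec s₀ π ∧ ∃ τ : ν → ℕ,
    (∀ t ∈ gn.T, τ t ≤ π.length ∧ stateAt s₀ π (τ t) ∈ gn.goal t) ∧
    (∀ t ∈ gn.T, ∀ u ∈ gn.T, gn.prec t u → τ t ≤ τ u)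

/-- A fact `φ` is a landmark of the relaxed HGN problem `(s₀, gn)` if every plan solving it
has `φ` in some intermediate state. -/
def IsRelaxedLandmark (s₀ : Set F) (gn : GoalNetwork F ν) (φ : F) : Prop :=
  ∀ π, SolvesRelaxed s₀ gn π → ∃ i ≤ π.length, φ ∈ stateAt s₀ π i

/-- An HGN method: a precondition and a goal network with a distinguished 'last' node `tg`
that is maximal in the network's order. -/
structure Method (F : Type*) (ν : Type*) where
  precond : Set F
  network : GoalNetwork F ν
  tg : ν
  tg_mem : tg ∈ network.T
  tg_max : ∀ u ∈ network.T, ¬ network.prec tg u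

/-- Method application `gn ∘ₜ m` (for node sets taken disjoint): the node set is the union of
the two node sets, the order contains both orders together with `tg ≺ t`, and goals are
inherited (from `network m` on its nodes, from `gn` elsewhere). -/
noncomputable def GoalNetwork.applyMethod (gn : GoalNetwork F ν) (t : ν) (m : Method F ν) :
    GoalNetwork F ν where
  T := gn.T ∪ m.network.T
  prec := fun a b => gn.prec a b ∨ m.network.prec a b ∨ (a = m.tg ∧ b = t)
  goal := fun a => if a ∈ m.network.T then m.network.goal a else gn.goal a

/-- Goal release `gn − t`: remove node `t` and all orderings involving it. -/
noncomputable def GoalNetwork.release (gn : GoalNetwork F ν) (t : ν) : GoalNetwork F ν where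
  T := gn.T.erase t
  prec := fun a b => gn.prec a b ∧ a ≠ t ∧ b ≠ t
  goal := gn.goal

/-- The HGN solution set `S(s₀, gn)` (Definition of solutions to HGN planning problems),
relative to relevance relations `relA` (actions) and `relM` (methods). -/
inductive HGNSol (relA : PAction F → Set (Set F) → Prop)
    (relM : Method F ν → Set (Set F) → Prop) :
    Set F → GoalNetwork F ν → List (PAction F) → Prop
  | base (s : Set F) (gn : GoalNetwork F ν) : gn.T = ∅ → HGNSol relA relM s gn []
  | satisfied (s : Set F) (gn : GoalNetwork F ν) (t : ν) (π : List (PAction F)) :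
      t ∈ gn.T → Unconstrained gn t → s ∈ gn.goal t →
      HGNSol relA relM s (gn.release t) π → HGNSol relA relM s gn π
  | action (s : Set F) (gn : GoalNetwork F ν) (t : ν) (a : PAction F) (π : List (PAction F)) :
      t ∈ gn.T → Unconstrained gn t → a.pre ⊆ s → relA a (gn.goal t) →
      HGNSol relA relM (applyAction s a) gn π → HGNSol relA relM s gn (a :: π)
  | method (s : Set F) (gn : GoalNetwork F ν) (t : ν) (m : Method F ν) (π : List (PAction F)) :
      t ∈ gn.T → Unconstrained gn t → m.precond ⊆ s → relM m (gn.goal t) →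
      Disjoint gn.T m.network.T →
      HGNSol relA relM s (gn.applyMethod t m) π → HGNSol relA relM s gn π

/-!
Every HGN solution already solves the relaxed problem, so a relaxed landmark occurs in it.
The schedule `τ` is built along the derivation of the solution: a goal released as satisfied
is scheduled at the current state, an action shifts all times by one, and a method
application only adds nodes and orderings, so a schedule of `gn ∘ₜ m` restricts to one
of `gn`.
-/

theorem stateAt_cons_succ (s : Set F) (a : PAction F) (π : List (PAction F)) (i : ℕ) :
    stateAt s (a :: π) (i + 1) = stateAt (applyAction s a) π i :=
  rfl

namespace SolvesRelaxed

variable {s : Set F} {gn : GoalNetwork F ν} {π : List (PAction F)}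

theorem of_T_eq_empty (hexec : Exec s π) (hT : gn.T = ∅) : SolvesRelaxed s gn π :=
  ⟨hexec, fun _ => 0, by simp [hT], by simp [hT]⟩

theorem mono {gn' : GoalNetwork F ν} (h : SolvesRelaxed s gn' π) (hT : gn.T ⊆ gn'.T)
    (hgoal : ∀ t ∈ gn.T, gn'.goal t = gn.goal t)
    (hprec : ∀ t ∈ gn.T, ∀ u ∈ gn.T, gn.prec t u → gn'.prec t u) :
    SolvesRelaxed s gn π := by
  obtain ⟨hexec, τ, hτ, hτ_mono⟩ := h
  refine ⟨hexec, τ, fun t ht => ?_, fun t ht u hu htu => ?_⟩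
  · simpa only [hgoal t ht] using hτ t (hT ht)
  · exact hτ_mono t (hT ht) u (hT hu) (hprec t ht u hu htu)

/-- The released node `t` is scheduled at time `0`, which respects the order because `t`
has no predecessor. -/
theorem of_release {t : ν} (h : SolvesRelaxed s (gn.release t) π) (ht : Unconstrained gn t)
    (hs : s ∈ gn.goal t) : SolvesRelaxed s gn π := by
  obtain ⟨hexec, τ, hτ, hτ_mono⟩ := h
  refine ⟨hexec, fun u => if u = t then 0 else τ u, fun u hu => ?_, fun u hu v hv huv => ?_⟩
  · by_cases hut : u = t
    · subst hut
      simp only [↓reduceIte]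
      exact ⟨Nat.zero_le _, hs⟩
    · simp only [if_neg hut]
      exact hτ u (Finset.mem_erase.mpr ⟨hut, hu⟩)
  · have hvt : v ≠ t := by
      rintro rfl
      exact ht u hu huv
    by_cases hut : u = t
    · simp [hut]
    · simpa [hut, hvt] using
        hτ_mono u (Finset.mem_erase.mpr ⟨hut, hu⟩) v (Finset.mem_erase.mpr ⟨hvt, hv⟩) ⟨huv, hut, hvt⟩

theorem cons {a : PAction F} (h : SolvesRelaxed (applyAction s a) gn π) (ha : a.pre ⊆ s) :
    SolvesRelaxed s gn (a :: π) := by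
  obtain ⟨hexec, τ, hτ, hτ_mono⟩ := h
  refine ⟨⟨ha, hexec⟩, fun u => τ u + 1, fun u hu => ?_, fun u hu v hv huv => ?_⟩
  · obtain ⟨hle, hgoal⟩ := hτ u hu
    exact ⟨by simpa using hle, by rwa [stateAt_cons_succ]⟩
  · simpa using hτ_mono u hu v hv huv

theorem of_applyMethod {t : ν} {m : Method F ν} (h : SolvesRelaxed s (gn.applyMethod t m) π)
    (hdisj : Disjoint gn.T m.network.T) : SolvesRelaxed s gn π :=
  h.mono Finset.subset_union_left
    (fun _ hu => if_neg (Finset.disjoint_left.mp hdisj hu))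
    (fun _ _ _ _ htu => Or.inl htu)

end SolvesRelaxed

theorem HGNSol.solvesRelaxed {relA : PAction F → Set (Set F) → Prop}
    {relM : Method F ν → Set (Set F) → Prop} {s : Set F} {gn : GoalNetwork F ν}
    {π : List (PAction F)} (h : HGNSol relA relM s gn π) : SolvesRelaxed s gn π := by
  induction h with
  | base _ _ hT => exact .of_T_eq_empty trivial hT
  | satisfied _ _ _ _ _ ht hs _ ih => exact ih.of_release ht hs
  | action _ _ _ _ _ _ _ ha _ _ ih => exact ih.cons ha
  | method _ _ _ _ _ _ _ _ _ hdisj _ ih => exact ih.of_applyMethod hdisj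

theorem hgn_landmark_of_relaxedLandmark_general (s₀ : Set F) (gn₀ : GoalNetwork F ν)
    (φ : F) (hφ : IsRelaxedLandmark s₀ gn₀ φ)
    (relA : PAction F → Set (Set F) → Prop) (relM : Method F ν → Set (Set F) → Prop)
    (π : List (PAction F)) (hπ : HGNSol relA relM s₀ gn₀ π) :
    ∃ i ≤ π.length, φ ∈ stateAt s₀ π i :=
  hφ π hπ.solvesRelaxed

/-- A landmark of the relaxed HGN planning problem `(s₀, gn₀)` is a landmark of the HGN
planning problem itself: for any relevance relations, every HGN solution has the fact in
some intermediate state. -/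
theorem hgn_landmark_of_relaxedLandmark (s₀ : Set F) (gn₀ : GoalNetwork F ν)
    (hstrict : gn₀.IsStrictOrder) (φ : F) (hφ : IsRelaxedLandmark s₀ gn₀ φ)
    (relA : PAction F → Set (Set F) → Prop) (relM : Method F ν → Set (Set F) → Prop)
    (π : List (PAction F)) (hπ : HGNSol relA relM s₀ gn₀ π) :
    ∃ i ≤ π.length, φ ∈ stateAt s₀ π i :=
  hgn_landmark_of_relaxedLandmark_general s₀ gn₀ φ hφ relA relM π hπ
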